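/- Let G be a finite non-abelian group of odd order, H a subgroup of G with H ≠ Z(H,G), and g ∈ K(H,G) with g ≠ 1. Then the relative g-noncommuting graph Γ^g_{H,G} is not a tree. -/

import Mathlib

/-!
Commuting elements have trivial commutator, and `1 ≠ g, g⁻¹`, so distinct commuting vertices
one of which lies in `H` are adjacent. For `x ∈ H` with `x ≠ 1`, odd order forces `x ^ 2 ≠ 1`,
so `1, x, x ^ 2` is a triangle, which a tree cannot contain.
-/

/-- The relative `g`-noncommuting graph of a group `G` with respect to a subgroup `H`:
vertices are the elements of `G`, and distinct `x`, `y` are adjacent iff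
(`x ∈ H` or `y ∈ H`) and the commutator `x⁻¹ * y⁻¹ * x * y` is neither `g` nor `g⁻¹`. -/
def relGraph {G : Type*} [Group G] (H : Subgroup G) (g : G) : SimpleGraph G where
  Adj x y := x ≠ y ∧ (x ∈ H ∨ y ∈ H) ∧ x⁻¹ * y⁻¹ * x * y ≠ g ∧ x⁻¹ * y⁻¹ * x * y ≠ g⁻¹
  symm := by
    constructor
    rintro x y ⟨hxy, hmem, h1, h2⟩
    have key : (x⁻¹ * y⁻¹ * x * y)⁻¹ = y⁻¹ * x⁻¹ * y * x := by group
    refine ⟨hxy.symm, hmem.symm, fun h => h2 ?_, fun h => h1 ?_⟩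
    · rw [← inv_inv (x⁻¹ * y⁻¹ * x * y), key, h]
    · rw [← inv_inv (x⁻¹ * y⁻¹ * x * y), key, h, inv_inv]
  loopless := ⟨fun x h => h.1 rfl⟩

section

variable {G : Type*} [Group G]

theorem pow_two_ne_one_of_odd_natCard (hodd : Odd (Nat.card G)) {x : G} (hx : x ≠ 1) :
    x ^ 2 ≠ 1 := fun h =>
  hx <| (Nat.coprime_two_right.mpr hodd).pow_left_bijective.injective (h.trans (one_pow 2).symm)

theorem relGraph_adj_of_commute {H : Subgroup G} {g : G} (hg : g ≠ 1) {x y : G} (hxy : x ≠ y)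
    (hmem : x ∈ H ∨ y ∈ H) (hc : Commute x y) : (relGraph H g).Adj x y := by
  have hcomm : x⁻¹ * y⁻¹ * x * y = 1 := by
    rw [mul_assoc, hc.eq, ← mul_assoc, ← mul_inv_rev, mul_assoc, inv_mul_cancel]
  refine ⟨hxy, hmem, ?_, ?_⟩ <;> rw [hcomm]
  · exact hg.symm
  · exact (inv_ne_one.mpr hg).symm

theorem relGraph_isNClique_one_self_sq [DecidableEq G] {H : Subgroup G} {g : G} (hg : g ≠ 1)
    {x : G} (hxH : x ∈ H) (hx : x ≠ 1) (hx2 : x ^ 2 ≠ 1) :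
    (relGraph H g).IsNClique 3 {1, x, x ^ 2} := by
  have hxx2 : x ≠ x ^ 2 := fun h => hx (by simpa [pow_two] using h)
  exact SimpleGraph.is3Clique_triple_iff.mpr
    ⟨relGraph_adj_of_commute hg hx.symm (.inl H.one_mem) (.one_left x),
      relGraph_adj_of_commute hg hx2.symm (.inl H.one_mem) (.one_left _),
      relGraph_adj_of_commute hg hxx2 (.inl hxH) (.self_pow x 2)⟩

end

theorem stmt12_general {G : Type*} [Group G]
    (hodd : Odd (Nat.card G))
    (H : Subgroup G)
    (hHZ : (H : Set G) ≠ {x : G | x ∈ H ∧ ∀ y : G, x * y = y * x})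
    (g : G) (hg : g ≠ 1) :
    ¬ (relGraph H g).IsTree := by
  obtain ⟨x, hxH, hx⟩ : ∃ x ∈ H, x ≠ 1 := by
    by_contra! htriv
    refine hHZ (Set.ext fun z => ⟨fun hz => ⟨hz, fun y => ?_⟩, And.left⟩)
    simp [htriv z hz]
  classical
  exact fun htree => htree.isAcyclic.cliqueFree le_rfl _
    (relGraph_isNClique_one_self_sq hg hxH hx (pow_two_ne_one_of_odd_natCard hodd hx))

theorem stmt12 {G : Type*} [Group G] [Fintype G]
    (hG : ¬ ∀ a b : G, a * b = b * a)
    (hodd : Odd (Nat.card G))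
    (H : Subgroup G)
    (hHZ : (H : Set G) ≠ {x : G | x ∈ H ∧ ∀ y : G, x * y = y * x})
    (g : G) (hgK : ∃ x ∈ H, ∃ y : G, x⁻¹ * y⁻¹ * x * y = g) (hg : g ≠ 1) :
    ¬ (relGraph H g).IsTree :=
  stmt12_general hodd H hHZ g hg
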